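/- arXiv:2307.01661 — 2 statements merged into one kernel-verified Lean document; each statement's English description precedes it below -/
import Mathlib

section
/- Let G be a finite non-cyclic group. Then the proper enhanced power graph P_E**(G) is the complement of a line graph of some graph if and only if G is isomorphic to an elementary abelian 2-group Z_2 × ⋯ × Z_2 or to the quaternion group Q_8. -/
open Subgroup

/-- A graph is a line graph if it is isomorphic to the line graph of some graph. -/
def IsLineGraph {V : Type} (Γ : SimpleGraph V) : Prop :=
  ∃ (W : Type) (H : SimpleGraph W), Nonempty (Γ ≃g H.lineGraph)

/-- The power graph of a group: distinct `x`, `y` are adjacent iff one is a power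
of the other. -/
def powerGraph (G : Type) [Group G] : SimpleGraph G where
  Adj x y := x ≠ y ∧ (x ∈ zpowers y ∨ y ∈ zpowers x)
  symm := ⟨by rintro x y ⟨hne, h⟩; exact ⟨hne.symm, h.symm⟩⟩
  loopless := ⟨by rintro x ⟨hne, _⟩; exact hne rfl⟩

/-- The enhanced power graph of a group: distinct `x`, `y` are adjacent iff both are
powers of a common element. -/
def enhancedPowerGraph (G : Type) [Group G] : SimpleGraph G where
  Adj x y := x ≠ y ∧ ∃ z : G, x ∈ zpowers z ∧ y ∈ zpowers z
  symm := ⟨by rintro x y ⟨hne, z, hx, hy⟩; exact ⟨hne.symm, z, hy, hx⟩⟩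
  loopless := ⟨by rintro x ⟨hne, _⟩; exact hne rfl⟩

/-- A vertex is dominating if it is adjacent to all other vertices. -/
def IsDominatingVertex {V : Type} (Γ : SimpleGraph V) (v : V) : Prop :=
  ∀ w : V, w ≠ v → Γ.Adj v w

/-- The graph induced on the non-dominating vertices. -/
def properGraph {V : Type} (Γ : SimpleGraph V) :
    SimpleGraph {v : V | ¬ IsDominatingVertex Γ v} :=
  Γ.induce {v : V | ¬ IsDominatingVertex Γ v}

/-- The proper power graph `P**(G)`. -/
abbrev properPowerGraph (G : Type) [Group G] := properGraph (powerGraph G)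

/-- The proper enhanced power graph `P_E**(G)`. -/
abbrev properEnhancedPowerGraph (G : Type) [Group G] := properGraph (enhancedPowerGraph G)

/-- A maximal cyclic subgroup: cyclic and not properly contained in a cyclic subgroup. -/
def IsMaxCyclic {G : Type} [Group G] (M : Subgroup G) : Prop :=
  IsCyclic M ∧ ∀ N : Subgroup G, IsCyclic N → M ≤ N → N = M

/-- `T(G)`: the intersection of all maximal cyclic subgroups of `G`. -/
def cyclicCore (G : Type) [Group G] : Subgroup G :=
  ⨅ (M : Subgroup G) (_ : IsMaxCyclic M), M

/-- `G` is an elementary abelian 2-group `Z₂ × ⋯ × Z₂`. -/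
def IsElemAbelianTwo (G : Type) [Group G] : Prop :=
  ∃ k : ℕ, 1 ≤ k ∧ Nonempty (G ≃* (Fin k → Multiplicative (ZMod 2)))

/-!
Two elements are adjacent in `P_E(G)` exactly when they lie in a common maximal cyclic subgroup,
and dominating vertices lie in the intersection `T` of all maximal cyclic subgroups. Line graphs
are claw-free and contain no induced `K₅` minus an edge; in `P_E**(G)` these become the forbidden
induced subgraphs `K₃ ∪ K₁` and `K₂ ∪ 3K₁`.

If every element has order at most two, `P_E**(G)` has no edges and its complement is complete,
the line graph of a star. Otherwise pick `g` generating a maximal cyclic subgroup with `g² ≠ 1`.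
Forbidding `K₃ ∪ K₁` around the triangle `g, g⁻¹, b` shows `⟨g⟩ ⊆ T ∪ {g, g⁻¹}`; forbidding
`K₂ ∪ 3K₁` around the edge `g, g⁻¹` leaves room for only two more maximal cyclic subgroups,
generated by some `a` and by `g * a`. Then `g²` is a nontrivial element of `T`, which forces every
generator `k` of a maximal cyclic subgroup to satisfy `k² = g⁻²`; so `g² = a² = (g a)²` and
`g⁴ = 1`, the quaternion relations. Conversely `P_E**(Q₈)` is the perfect matching `x ↔ x⁻¹` on
`±i, ±j, ±k`, whose complement is the line graph of `K₄`.
-/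

namespace Sym2

variable {W : Type}

theorem meets_or_meets_or_meets {e a b c : Sym2 W} (ha : ∃ x ∈ e, x ∈ a)
    (hb : ∃ x ∈ e, x ∈ b) (hc : ∃ x ∈ e, x ∈ c) :
    (∃ x ∈ a, x ∈ b) ∨ (∃ x ∈ a, x ∈ c) ∨ ∃ x ∈ b, x ∈ c := by
  induction e using Sym2.ind
  simp only [Sym2.mem_iff, exists_eq_or_imp, exists_eq_left] at ha hb hc
  grind

theorem exists_eq_mk_of_meets {d a b : Sym2 W} (hab : ∀ x ∈ a, x ∉ b) (ha : ∃ x ∈ d, x ∈ a)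
    (hb : ∃ x ∈ d, x ∈ b) : ∃ p ∈ a, ∃ q ∈ b, d = s(p, q) := by
  obtain ⟨p, hpd, hpa⟩ := ha
  obtain ⟨q, hqd, hqb⟩ := hb
  have hpq : p ≠ q := by rintro rfl; exact hab p hpa hqb
  exact ⟨p, hpa, q, hqb, (Sym2.mem_and_mem_iff hpq).mp ⟨hpd, hqd⟩⟩

/-- Each `dᵢ` joins a vertex of `a` to a vertex of `b`, and three pairwise meeting such edges
would form a triangle in `K₂,₂`. -/
theorem eq_or_eq_or_eq_of_meets {a b d₁ d₂ d₃ : Sym2 W} (hab : ∀ x ∈ a, x ∉ b)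
    (h₁a : ∃ x ∈ d₁, x ∈ a) (h₂a : ∃ x ∈ d₂, x ∈ a) (h₃a : ∃ x ∈ d₃, x ∈ a)
    (h₁b : ∃ x ∈ d₁, x ∈ b) (h₂b : ∃ x ∈ d₂, x ∈ b) (h₃b : ∃ x ∈ d₃, x ∈ b)
    (h₁₂ : ∃ x ∈ d₁, x ∈ d₂) (h₁₃ : ∃ x ∈ d₁, x ∈ d₃) (h₂₃ : ∃ x ∈ d₂, x ∈ d₃) :
    d₁ = d₂ ∨ d₁ = d₃ ∨ d₂ = d₃ := by
  obtain ⟨p₁, hp₁, q₁, hq₁, rfl⟩ := exists_eq_mk_of_meets hab h₁a h₁b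
  obtain ⟨p₂, hp₂, q₂, hq₂, rfl⟩ := exists_eq_mk_of_meets hab h₂a h₂b
  obtain ⟨p₃, hp₃, q₃, hq₃, rfl⟩ := exists_eq_mk_of_meets hab h₃a h₃b
  induction a using Sym2.ind
  induction b using Sym2.ind
  simp only [Sym2.mem_iff, exists_eq_or_imp, exists_eq_left, Sym2.eq_iff] at *
  grind

end Sym2

section LineGraph

variable {V : Type} {Λ : SimpleGraph V}

theorem IsLineGraph.exists_sym2 (hΛ : IsLineGraph Λ) :
    ∃ (W : Type) (f : V → Sym2 W), f.Injective ∧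
      ∀ u v, Λ.Adj u v ↔ u ≠ v ∧ ∃ x ∈ f u, x ∈ f v := by
  obtain ⟨W, H, ⟨φ⟩⟩ := hΛ
  refine ⟨W, fun v => φ v, Subtype.val_injective.comp φ.injective, fun u v => ?_⟩
  rw [← φ.map_adj_iff, SimpleGraph.lineGraph_adj_iff_exists, φ.injective.ne_iff]

theorem isLineGraph_of_sym2 {W : Type} (f : V → Sym2 W) (hf : f.Injective)
    (hdiag : ∀ v, ¬ (f v).IsDiag) (hadj : ∀ u v, Λ.Adj u v ↔ u ≠ v ∧ ∃ x ∈ f u, x ∈ f v) :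
    IsLineGraph Λ := by
  let H := SimpleGraph.fromEdgeSet (Set.range f)
  let F : V → H.edgeSet := fun v => ⟨f v, by simp [H, hdiag]⟩
  have hF : F.Bijective := by
    refine ⟨fun u v h => hf (congrArg Subtype.val h), ?_⟩
    rintro ⟨e, he⟩
    obtain ⟨⟨v, rfl⟩, -⟩ : e ∈ Set.range f ∧ ¬ e.IsDiag := by simpa [H] using he
    exact ⟨v, rfl⟩
  refine ⟨W, H, ⟨⟨Equiv.ofBijective F hF, fun {u v} => ?_⟩⟩⟩
  rw [hadj, SimpleGraph.lineGraph_adj_iff_exists, Equiv.ofBijective_apply, Equiv.ofBijective_apply,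
    hF.injective.ne_iff]

theorem isLineGraph_top (V : Type) : IsLineGraph (⊤ : SimpleGraph V) :=
  isLineGraph_of_sym2 (fun v => s(none, some v))
    (fun _ _ h => Option.some_injective _ (Sym2.congr_right.mp h)) (fun _ => by simp)
    (fun _ _ => by simp)

theorem IsLineGraph.of_iso {V' : Type} {Λ' : SimpleGraph V'} (hΛ' : IsLineGraph Λ') (φ : Λ ≃g Λ') :
    IsLineGraph Λ := by
  obtain ⟨W, H, ⟨ψ⟩⟩ := hΛ'
  exact ⟨W, H, ⟨ψ.comp φ⟩⟩

/-- Line graphs are claw-free. -/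
theorem IsLineGraph.adj_or_adj_or_adj (hΛ : IsLineGraph Λ) {d a b c : V} (hda : Λ.Adj d a)
    (hdb : Λ.Adj d b) (hdc : Λ.Adj d c) (hab : a ≠ b) (hac : a ≠ c) (hbc : b ≠ c) :
    Λ.Adj a b ∨ Λ.Adj a c ∨ Λ.Adj b c := by
  obtain ⟨W, f, -, hadj⟩ := hΛ.exists_sym2
  simp only [hadj] at hda hdb hdc ⊢
  simpa [hab, hac, hbc] using Sym2.meets_or_meets_or_meets hda.2 hdb.2 hdc.2

/-- `K₅` minus an edge is not an induced subgraph of a line graph. -/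
theorem IsLineGraph.adj_of_common_triangle (hΛ : IsLineGraph Λ) {a b d₁ d₂ d₃ : V} (hab : a ≠ b)
    (h₁a : Λ.Adj d₁ a) (h₂a : Λ.Adj d₂ a) (h₃a : Λ.Adj d₃ a)
    (h₁b : Λ.Adj d₁ b) (h₂b : Λ.Adj d₂ b) (h₃b : Λ.Adj d₃ b)
    (h₁₂ : Λ.Adj d₁ d₂) (h₁₃ : Λ.Adj d₁ d₃) (h₂₃ : Λ.Adj d₂ d₃) : Λ.Adj a b := by
  obtain ⟨W, f, hf, hadj⟩ := hΛ.exists_sym2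
  by_contra hnab
  have hdisj : ∀ x ∈ f a, x ∉ f b := fun x hxa hxb => hnab ((hadj a b).mpr ⟨hab, x, hxa, hxb⟩)
  simp only [hadj] at h₁a h₂a h₃a h₁b h₂b h₃b h₁₂ h₁₃ h₂₃
  obtain h | h | h := Sym2.eq_or_eq_or_eq_of_meets hdisj h₁a.2 h₂a.2 h₃a.2 h₁b.2 h₂b.2 h₃b.2
    h₁₂.2 h₁₃.2 h₂₃.2
  exacts [h₁₂.1 (hf h), h₁₃.1 (hf h), h₂₃.1 (hf h)]

end LineGraph

section ProperGraph

variable {V V' : Type} {Γ : SimpleGraph V} {Γ' : SimpleGraph V'}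

theorem compl_properGraph (Γ : SimpleGraph V) :
    (properGraph Γ)ᶜ = Γᶜ.induce {v | ¬ IsDominatingVertex Γ v} := by
  ext u v
  simp [properGraph, Subtype.ext_iff]

theorem SimpleGraph.Iso.isDominatingVertex_iff (φ : Γ ≃g Γ') {v : V} :
    IsDominatingVertex Γ' (φ v) ↔ IsDominatingVertex Γ v := by
  simp only [IsDominatingVertex, φ.surjective.forall, φ.injective.ne_iff, φ.map_adj_iff]

def SimpleGraph.Iso.properGraph (φ : Γ ≃g Γ') : properGraph Γ ≃g properGraph Γ' where
  toEquiv := φ.toEquiv.subtypeEquiv fun _ => φ.isDominatingVertex_iff.symm.not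
  map_rel_iff' := φ.map_adj_iff

def SimpleGraph.Iso.compl (φ : Γ ≃g Γ') : Γᶜ ≃g Γ'ᶜ where
  toEquiv := φ.toEquiv
  map_rel_iff' := by simp [φ.map_adj_iff]

end ProperGraph

section MaxCyclic

variable {G : Type} [Group G]

theorem eq_one_or_eq_of_mem_zpowers {x z : G} (hz : z ^ 2 = 1) (hx : x ∈ zpowers z) :
    x = 1 ∨ x = z := by
  obtain ⟨n, rfl⟩ := mem_zpowers_iff.mp hx
  obtain ⟨m, rfl | rfl⟩ := n.even_or_odd'
  · simp [zpow_mul, hz]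
  · simp [zpow_add, zpow_mul, hz]

theorem IsMaxCyclic.zpowers_eq_of_mem {g h : G} (hg : IsMaxCyclic (zpowers g))
    (hgh : g ∈ zpowers h) : zpowers h = zpowers g :=
  hg.2 _ inferInstance (zpowers_le.mpr hgh)

theorem IsMaxCyclic.notMem_zpowers_of_notMem {g h : G} (hg : IsMaxCyclic (zpowers g))
    (hhg : h ∉ zpowers g) : g ∉ zpowers h :=
  fun hgh => hhg (hg.zpowers_eq_of_mem hgh ▸ mem_zpowers h)

theorem IsMaxCyclic.inv {g : G} (hg : IsMaxCyclic (zpowers g)) : IsMaxCyclic (zpowers g⁻¹) := by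
  rwa [zpowers_inv]

theorem exists_isMaxCyclic_zpowers_mem [Finite G] (x : G) :
    ∃ g : G, IsMaxCyclic (zpowers g) ∧ x ∈ zpowers g := by
  obtain ⟨M, ⟨hM, hxM⟩, hmax⟩ :=
    (Set.toFinite {N : Subgroup G | IsCyclic N ∧ x ∈ N}).exists_maximalFor id _
      ⟨zpowers x, inferInstance, mem_zpowers x⟩
  obtain ⟨g, rfl⟩ := M.isCyclic_iff_exists_zpowers_eq_top.mp hM
  exact ⟨g, ⟨hM, fun N hN hle => le_antisymm (hmax ⟨hN, hle hxM⟩ hle) hle⟩, hxM⟩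

theorem mem_cyclicCore_iff {x : G} :
    x ∈ cyclicCore G ↔ ∀ g : G, IsMaxCyclic (zpowers g) → x ∈ zpowers g := by
  simp only [cyclicCore, mem_iInf]
  refine ⟨fun h g hg => h _ hg, fun h M hM => ?_⟩
  obtain ⟨g, rfl⟩ := M.isCyclic_iff_exists_zpowers_eq_top.mp hM.1
  exact h g hM

theorem cyclicCore_le_zpowers {g : G} (hg : IsMaxCyclic (zpowers g)) : cyclicCore G ≤ zpowers g :=
  fun _ hx => mem_cyclicCore_iff.mp hx g hg

theorem IsMaxCyclic.notMem_cyclicCore [Finite G] (hnc : ¬ IsCyclic G) {g : G}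
    (hg : IsMaxCyclic (zpowers g)) : g ∉ cyclicCore G := by
  refine fun hgT => hnc <|
    isCyclic_iff_exists_zpowers_eq_top.mpr ⟨g, (eq_top_iff' _).mpr fun x => ?_⟩
  obtain ⟨h, hh, hxh⟩ := exists_isMaxCyclic_zpowers_mem x
  exact hg.zpowers_eq_of_mem (mem_cyclicCore_iff.mp hgT h hh) ▸ hxh

end MaxCyclic

section EnhancedPowerGraph

variable {G : Type} [Group G]

theorem isDominatingVertex_one : IsDominatingVertex (enhancedPowerGraph G) 1 :=
  fun w hw => ⟨hw.symm, w, one_mem _, mem_zpowers w⟩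

theorem IsDominatingVertex.mem_cyclicCore {v : G}
    (hv : IsDominatingVertex (enhancedPowerGraph G) v) : v ∈ cyclicCore G := by
  refine mem_cyclicCore_iff.mpr fun g hg => ?_
  obtain rfl | hgv := eq_or_ne g v
  · exact mem_zpowers g
  obtain ⟨-, z, hvz, hgz⟩ := hv g hgv
  exact hg.zpowers_eq_of_mem hgz ▸ hvz

theorem IsMaxCyclic.not_isDominatingVertex [Finite G] (hnc : ¬ IsCyclic G) {g : G}
    (hg : IsMaxCyclic (zpowers g)) : ¬ IsDominatingVertex (enhancedPowerGraph G) g :=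
  mt IsDominatingVertex.mem_cyclicCore (hg.notMem_cyclicCore hnc)

theorem compl_adj_of_notMem_zpowers {g y : G} (hg : IsMaxCyclic (zpowers g))
    (hy : y ∉ zpowers g) : (enhancedPowerGraph G)ᶜ.Adj g y :=
  ⟨fun h => hy (h ▸ mem_zpowers g), fun ⟨_, _, hgz, hyz⟩ => hy (hg.zpowers_eq_of_mem hgz ▸ hyz)⟩

theorem not_compl_adj_of_mem_zpowers {x y z : G} (hx : x ∈ zpowers z) (hy : y ∈ zpowers z) :
    ¬ (enhancedPowerGraph G)ᶜ.Adj x y :=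
  fun ⟨hne, hnadj⟩ => hnadj ⟨hne, z, hx, hy⟩

theorem properEnhancedPowerGraph_eq_bot (h : ∀ x : G, x ^ 2 = 1) :
    properEnhancedPowerGraph G = ⊥ := by
  ext ⟨u, hu⟩ ⟨v, hv⟩
  simp only [SimpleGraph.bot_adj, iff_false]
  rintro ⟨huv, z, huz, hvz⟩
  have hne_one : ∀ {x : G}, ¬ IsDominatingVertex (enhancedPowerGraph G) x → x ≠ 1 := by
    rintro x hx rfl
    exact hx isDominatingVertex_one
  obtain rfl | rfl := eq_one_or_eq_of_mem_zpowers (h z) huz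
  · exact hne_one hu rfl
  obtain rfl | rfl := eq_one_or_eq_of_mem_zpowers (h u) hvz
  · exact hne_one hv rfl
  · exact huv rfl

def MulEquiv.enhancedPowerGraphIso {H : Type} [Group H] (e : G ≃* H) :
    enhancedPowerGraph G ≃g enhancedPowerGraph H where
  toEquiv := e.toEquiv
  map_rel_iff' {x y} := by
    show (e x ≠ e y ∧ ∃ z, e x ∈ zpowers z ∧ e y ∈ zpowers z) ↔ _
    simp only [e.surjective.exists, mem_zpowers_iff, ← map_zpow, e.injective.eq_iff,
      e.injective.ne_iff]
    rfl

end EnhancedPowerGraph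

section LineGraphComplement

variable {G : Type} [Group G] [Finite G]

theorem mem_cyclicCore_of_mem_zpowers (hnc : ¬ IsCyclic G)
    (hΛ : IsLineGraph (properEnhancedPowerGraph G)ᶜ) {g b : G} (hg : IsMaxCyclic (zpowers g))
    (hgg : g ≠ g⁻¹) (hb : b ∈ zpowers g) (hbg : b ≠ g) (hbg' : b ≠ g⁻¹) : b ∈ cyclicCore G := by
  rw [compl_properGraph] at hΛ
  by_contra hbT
  obtain ⟨n, hn, hbn⟩ : ∃ n, IsMaxCyclic (zpowers n) ∧ b ∉ zpowers n := by
    simpa [mem_cyclicCore_iff] using hbT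
  have hgn : g ∉ zpowers n := fun hgn => hbn (hg.zpowers_eq_of_mem hgn ▸ hb)
  have hg' : g⁻¹ ∈ zpowers g := inv_mem (mem_zpowers g)
  -- `g`, `g⁻¹`, `b` would be three pairwise non-adjacent neighbours of `n` in the line graph
  obtain h | h | h := hΛ.adj_or_adj_or_adj (d := ⟨n, hn.not_isDominatingVertex hnc⟩)
    (a := ⟨g, hg.not_isDominatingVertex hnc⟩) (b := ⟨g⁻¹, hg.inv.not_isDominatingVertex hnc⟩)
    (c := ⟨b, mt IsDominatingVertex.mem_cyclicCore hbT⟩) (compl_adj_of_notMem_zpowers hn hgn)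
    (compl_adj_of_notMem_zpowers hn (by simpa using hgn)) (compl_adj_of_notMem_zpowers hn hbn)
    (by simpa using hgg) (by simpa using hbg.symm) (by simpa using hbg'.symm)
  exacts [not_compl_adj_of_mem_zpowers (mem_zpowers g) hg' h,
    not_compl_adj_of_mem_zpowers (mem_zpowers g) hb h, not_compl_adj_of_mem_zpowers hg' hb h]

theorem isMaxCyclic_zpowers_of_notMem_cyclicCore (hnc : ¬ IsCyclic G)
    (hΛ : IsLineGraph (properEnhancedPowerGraph G)ᶜ) {g x : G} (hg : IsMaxCyclic (zpowers g))
    (hgg : g ≠ g⁻¹) (hx : x ∈ zpowers g) (hxT : x ∉ cyclicCore G) : IsMaxCyclic (zpowers x) := by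
  by_contra h
  refine hxT (mem_cyclicCore_of_mem_zpowers hnc hΛ hg hgg hx ?_ ?_) <;> rintro rfl
  exacts [h hg, h hg.inv]

theorem mul_self_eq_inv_of_mem_cyclicCore (hnc : ¬ IsCyclic G)
    (hΛ : IsLineGraph (properEnhancedPowerGraph G)ᶜ) {k w : G} (hk : IsMaxCyclic (zpowers k))
    (hkk : k ≠ k⁻¹) (hw : w ∈ cyclicCore G) (hw1 : w ≠ 1) : k * k = w⁻¹ := by
  -- `k * w` lies in `⟨k⟩` but not in the core, so it can only be `k⁻¹`
  have hkw : k * w = k⁻¹ := by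
    by_contra hne
    refine hk.notMem_cyclicCore hnc ?_
    have := mem_cyclicCore_of_mem_zpowers hnc hΛ hk hkk
      (mul_mem (mem_zpowers k) (cyclicCore_le_zpowers hk hw)) (by simpa using hw1) hne
    simpa using mul_mem this (inv_mem hw)
  exact eq_inv_of_mul_eq_one_left (by rw [mul_assoc, hkw, mul_inv_cancel])

theorem IsMaxCyclic.ne_inv (hnc : ¬ IsCyclic G) {k w : G} (hk : IsMaxCyclic (zpowers k))
    (hw : w ∈ cyclicCore G) (hw1 : w ≠ 1) : k ≠ k⁻¹ := by
  intro hkk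
  have hk2 : k ^ 2 = 1 := by rw [sq, mul_eq_one_iff_eq_inv]; exact hkk
  obtain rfl | rfl := eq_one_or_eq_of_mem_zpowers hk2 (cyclicCore_le_zpowers hk hw)
  exacts [hw1 rfl, hk.notMem_cyclicCore hnc hw]

theorem mem_zpowers_or_mem_zpowers_or_mem_zpowers (hnc : ¬ IsCyclic G)
    (hΛ : IsLineGraph (properEnhancedPowerGraph G)ᶜ) {g a b : G} (hg : IsMaxCyclic (zpowers g))
    (hgg : g ≠ g⁻¹) (ha : IsMaxCyclic (zpowers a)) (hb : IsMaxCyclic (zpowers b))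
    (hag : a ∉ zpowers g) (hbg : b ∉ zpowers g) (hba : b ∉ zpowers a) (x : G) :
    x ∈ zpowers g ∨ x ∈ zpowers a ∨ x ∈ zpowers b := by
  rw [compl_properGraph] at hΛ
  obtain ⟨c, hc, hxc⟩ := exists_isMaxCyclic_zpowers_mem x
  by_contra! hx
  -- the generators `a`, `b`, `c` and `g`, `g⁻¹` would span a `K₅` minus an edge in the line graph
  have hcnot : ∀ {y : G}, x ∉ zpowers y → c ∉ zpowers y := fun hxy hcy =>
    hxy (zpowers_le.mpr hcy hxc)
  have adj_g : ∀ {y : G}, IsMaxCyclic (zpowers y) → y ∉ zpowers g →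
      (enhancedPowerGraph G)ᶜ.Adj y g ∧ (enhancedPowerGraph G)ᶜ.Adj y g⁻¹ := fun hy hyg =>
    ⟨compl_adj_of_notMem_zpowers hy (hg.notMem_zpowers_of_notMem hyg),
      compl_adj_of_notMem_zpowers hy (by simpa using hg.notMem_zpowers_of_notMem hyg)⟩
  have := hΛ.adj_of_common_triangle (a := ⟨g, hg.not_isDominatingVertex hnc⟩)
    (b := ⟨g⁻¹, hg.inv.not_isDominatingVertex hnc⟩) (d₁ := ⟨a, ha.not_isDominatingVertex hnc⟩)
    (d₂ := ⟨b, hb.not_isDominatingVertex hnc⟩) (d₃ := ⟨c, hc.not_isDominatingVertex hnc⟩)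
    (by simpa using hgg) (adj_g ha hag).1 (adj_g hb hbg).1 (adj_g hc (hcnot hx.1)).1
    (adj_g ha hag).2 (adj_g hb hbg).2 (adj_g hc (hcnot hx.1)).2
    (compl_adj_of_notMem_zpowers ha hba) (compl_adj_of_notMem_zpowers ha (hcnot hx.2.1))
    (compl_adj_of_notMem_zpowers hb (hcnot hx.2.2))
  exact not_compl_adj_of_mem_zpowers (mem_zpowers g) (inv_mem (mem_zpowers g)) this

end LineGraphComplement

section Quaternion

variable {G : Type} [Group G] {g k : G}

theorem pow_eq_pow_of_natCast_eq {n : ℕ} (hg : g ^ n = 1) {a b : ℕ} (h : (a : ZMod n) = b) :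
    g ^ a = g ^ b :=
  pow_eq_pow_iff_modEq.mpr <|
    ((ZMod.natCast_eq_natCast_iff a b n).mp h).of_dvd (orderOf_dvd_of_pow_eq_one hg)

def quaternionGroupHom (hg4 : g ^ 4 = 1) (hk2 : k ^ 2 = g ^ 2) (hgk : g * k = k * g⁻¹) :
    QuaternionGroup 2 →* G :=
  MonoidHom.mk' (fun
      | .a i => g ^ i.val
      | .xa i => k * g ^ i.val) <| by
    have hswap (m : ℕ) : g ^ m * k = k * g ^ (3 * m) := by
      rw [((SemiconjBy.pow_right hgk.symm m).eq).symm, inv_eq_of_mul_eq_one_right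
        (show g * g ^ 3 = 1 by rw [← pow_succ', hg4]), ← pow_mul, mul_comm]
    have h4 : (4 : ZMod 4) = 0 := rfl
    rintro (i | i) (j | j)
    · show g ^ (i + j).val = g ^ i.val * g ^ j.val
      rw [← pow_add]
      exact pow_eq_pow_of_natCast_eq hg4 (by simp)
    · show k * g ^ (j - i).val = g ^ i.val * (k * g ^ j.val)
      rw [← mul_assoc, hswap, mul_assoc, ← pow_add]
      refine congrArg (k * ·) (pow_eq_pow_of_natCast_eq hg4 ?_)
      push_cast [ZMod.natCast_zmod_val]
      linear_combination (-i) * h4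
    · show k * g ^ (i + j).val = k * g ^ i.val * g ^ j.val
      rw [mul_assoc, ← pow_add]
      exact congrArg (k * ·) (pow_eq_pow_of_natCast_eq hg4 (by simp))
    · show g ^ (2 + j - i).val = k * g ^ i.val * (k * g ^ j.val)
      rw [mul_assoc, ← mul_assoc (g ^ i.val), hswap, ← mul_assoc, ← mul_assoc, ← pow_two k, hk2,
        mul_assoc, ← pow_add, ← pow_add]
      refine pow_eq_pow_of_natCast_eq hg4 ?_
      push_cast [ZMod.natCast_zmod_val]
      linear_combination (-i) * h4

theorem quaternionGroupHom_injective (hg4 : g ^ 4 = 1) (hg2 : g ^ 2 ≠ 1) (hk2 : k ^ 2 = g ^ 2)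
    (hgk : g * k = k * g⁻¹) (hkg : k ∉ zpowers g) :
    Function.Injective (quaternionGroupHom hg4 hk2 hgk) := by
  have hord : orderOf g = 4 := orderOf_eq_prime_pow (p := 2) (n := 1) (by simpa using hg2) hg4
  refine (injective_iff_map_eq_one _).mpr ?_
  rintro (i | i) h
  · have hi : 4 ∣ i.val := hord ▸ orderOf_dvd_of_pow_eq_one h
    rw [← QuaternionGroup.a_zero, ← (ZMod.val_eq_zero i).mp (Nat.eq_zero_of_dvd_of_lt hi i.val_lt)]
  · refine absurd ?_ hkg
    rw [eq_inv_of_mul_eq_one_left h]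
    exact inv_mem (pow_mem (mem_zpowers g) _)

theorem closure_le_range_quaternionGroupHom (hg4 : g ^ 4 = 1) (hk2 : k ^ 2 = g ^ 2)
    (hgk : g * k = k * g⁻¹) : closure {g, k} ≤ (quaternionGroupHom hg4 hk2 hgk).range :=
  (closure_le _).mpr <| Set.insert_subset_iff.mpr
    ⟨⟨.a 1, pow_one g⟩, Set.singleton_subset_iff.mpr ⟨.xa 0, by simp [quaternionGroupHom]⟩⟩

theorem nonempty_mulEquiv_quaternionGroup (hg4 : g ^ 4 = 1) (hg2 : g ^ 2 ≠ 1)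
    (hk2 : k ^ 2 = g ^ 2) (hgk : g * k = k * g⁻¹) (hkg : k ∉ zpowers g)
    (hgen : closure {g, k} = ⊤) : Nonempty (G ≃* QuaternionGroup 2) := by
  have hsurj := MonoidHom.range_eq_top.mp <|
    eq_top_iff.mpr (hgen ▸ closure_le_range_quaternionGroupHom hg4 hk2 hgk)
  exact ⟨(MulEquiv.ofBijective _ ⟨quaternionGroupHom_injective hg4 hg2 hk2 hgk hkg, hsurj⟩).symm⟩

end Quaternion

section ElementaryAbelian

variable {G : Type} [Group G]

theorem IsElemAbelianTwo.sq_eq_one (he : IsElemAbelianTwo G) (x : G) : x ^ 2 = 1 := by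
  obtain ⟨k, -, ⟨e⟩⟩ := he
  refine e.injective ?_
  rw [map_pow, map_one]
  funext i
  exact (by decide : ∀ t : Multiplicative (ZMod 2), t ^ 2 = 1) _

theorem isElemAbelianTwo_of_sq_eq_one [Finite G] [Nontrivial G] (h : ∀ x : G, x ^ 2 = 1) :
    IsElemAbelianTwo G := by
  let : CommGroup G :=
    { mul_comm := fun x y =>
        (Commute.of_orderOf_dvd_two (fun g => orderOf_dvd_of_pow_eq_one (h g)) x y).eq }
  let : Module (ZMod 2) (Additive G) := AddCommGroup.zmodModule fun x => h x.toMul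
  refine ⟨Module.finrank (ZMod 2) (Additive G), Module.finrank_pos, ⟨?_⟩⟩
  exact (AddEquiv.toMultiplicative
    (Module.finBasis (ZMod 2) (Additive G)).equivFun.toAddEquiv).trans
      (MulEquiv.funMultiplicative _ _)

end ElementaryAbelian

section HardDirection

variable {G : Type} [Group G] [Finite G]

theorem mul_self_mem_cyclicCore (hnc : ¬ IsCyclic G)
    (hΛ : IsLineGraph (properEnhancedPowerGraph G)ᶜ) {g a b : G} (hg : IsMaxCyclic (zpowers g))
    (hgg : g ≠ g⁻¹) (hag : a ∉ zpowers g) (hgab : g * a ∈ zpowers b)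
    (hcover : ∀ x, x ∈ zpowers g ∨ x ∈ zpowers a ∨ x ∈ zpowers b) : g * g ∈ cyclicCore G := by
  have hga : g ∉ zpowers a := hg.notMem_zpowers_of_notMem hag
  have hgb : g ∉ zpowers b := fun h =>
    hag (by simpa using mul_mem (inv_mem (mem_zpowers g)) ((hg.zpowers_eq_of_mem h).le hgab))
  have hgab' : g⁻¹ * a ∈ zpowers b := by
    obtain h | h | h := hcover (g⁻¹ * a)
    · exact absurd (by simpa using mul_mem (mem_zpowers g) h) hag
    · exact absurd (by simpa using mul_mem h (inv_mem (mem_zpowers a))) hga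
    · exact h
  have hggb : g * g ∈ zpowers b := by
    rw [show g * g = g * a * (g⁻¹ * a)⁻¹ by group]
    exact mul_mem hgab (inv_mem hgab')
  refine mem_cyclicCore_of_mem_zpowers hnc hΛ hg hgg (mul_mem (mem_zpowers g) (mem_zpowers g))
    ?_ fun h => hgb (by simpa [h] using hggb)
  rw [Ne, mul_eq_left]
  rintro rfl
  exact hgg inv_one.symm

theorem exists_isMaxCyclic_zpowers_cover (hnc : ¬ IsCyclic G)
    (hΛ : IsLineGraph (properEnhancedPowerGraph G)ᶜ) {g : G} (hg : IsMaxCyclic (zpowers g))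
    (hgg : g ≠ g⁻¹) :
    ∃ a, a ∉ zpowers g ∧ IsMaxCyclic (zpowers a) ∧ IsMaxCyclic (zpowers (g * a)) ∧
      ∀ x, x ∈ zpowers g ∨ x ∈ zpowers a ∨ x ∈ zpowers (g * a) := by
  obtain ⟨a, ha, hga⟩ : ∃ a, IsMaxCyclic (zpowers a) ∧ g ∉ zpowers a := by
    simpa [mem_cyclicCore_iff] using hg.notMem_cyclicCore hnc
  have hag : a ∉ zpowers g := ha.notMem_zpowers_of_notMem hga
  obtain ⟨b, hb, hgab⟩ := exists_isMaxCyclic_zpowers_mem (g * a)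
  have hgaT : g * a ∉ zpowers g := fun h => hag (by simpa using mul_mem (inv_mem (mem_zpowers g)) h)
  have hbg : b ∉ zpowers g := fun h => hgaT (zpowers_le.mpr h hgab)
  have hba : b ∉ zpowers a := fun h =>
    hga (by simpa using mul_mem (zpowers_le.mpr h hgab) (inv_mem (mem_zpowers a)))
  have hcover := mem_zpowers_or_mem_zpowers_or_mem_zpowers hnc hΛ hg hgg ha hb hag hbg hba
  have hz := mul_self_mem_cyclicCore hnc hΛ hg hgg hag hgab hcover
  have hz1 : g * g ≠ 1 := by rwa [Ne, mul_eq_one_iff_eq_inv]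
  have hgaMax : IsMaxCyclic (zpowers (g * a)) :=
    isMaxCyclic_zpowers_of_notMem_cyclicCore hnc hΛ hb (hb.ne_inv hnc hz hz1) hgab
      fun h => hgaT (cyclicCore_le_zpowers hg h)
  refine ⟨a, hag, ha, hgaMax, fun x => ?_⟩
  rw [← hgaMax.zpowers_eq_of_mem hgab]
  exact hcover x

theorem nonempty_mulEquiv_quaternionGroup_of_isLineGraph (hnc : ¬ IsCyclic G)
    (hΛ : IsLineGraph (properEnhancedPowerGraph G)ᶜ) {x : G} (hx : x ^ 2 ≠ 1) :
    Nonempty (G ≃* QuaternionGroup 2) := by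
  obtain ⟨g, hg, hxg⟩ := exists_isMaxCyclic_zpowers_mem x
  have hgg : g ≠ g⁻¹ := by
    intro h
    have hg2 : g ^ 2 = 1 := by rw [sq, mul_eq_one_iff_eq_inv]; exact h
    obtain rfl | rfl := eq_one_or_eq_of_mem_zpowers hg2 hxg
    exacts [hx (one_pow 2), hx hg2]
  obtain ⟨a, hag, ha, hgaMax, hcover⟩ := exists_isMaxCyclic_zpowers_cover hnc hΛ hg hgg
  have hz := mul_self_mem_cyclicCore hnc hΛ hg hgg hag (mem_zpowers _) hcover
  have hz1 : g * g ≠ 1 := by rwa [Ne, mul_eq_one_iff_eq_inv]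
  have hsq : ∀ k, IsMaxCyclic (zpowers k) → k * k = (g * g)⁻¹ := fun k hk =>
    mul_self_eq_inv_of_mem_cyclicCore hnc hΛ hk (hk.ne_inv hnc hz hz1) hz hz1
  refine nonempty_mulEquiv_quaternionGroup (k := a) ?_ (by rwa [sq]) ?_ ?_ hag ?_
  · rw [show g ^ 4 = g * g * (g * g) by simp only [pow_succ, pow_zero, one_mul, mul_assoc],
      ← mul_inv_cancel (g * g), ← hsq g hg]
  · rw [sq, sq, hsq a ha, ← hsq g hg]
  · have h : g * a * g * a = a * a := by
      rw [mul_assoc (g * a), hsq (g * a) hgaMax, hsq a ha]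
    rw [eq_mul_inv_iff_mul_eq]
    exact mul_right_cancel h
  · have hg' : g ∈ closure {g, a} := subset_closure (by simp)
    have ha' : a ∈ closure {g, a} := subset_closure (by simp)
    refine (eq_top_iff' _).mpr fun x => ?_
    obtain h | h | h := hcover x
    exacts [zpowers_le.mpr hg' h, zpowers_le.mpr ha' h, zpowers_le.mpr (mul_mem hg' ha') h]

end HardDirection

/-- Unlike the classical `Subgroup.decidableMemZPowers`, this instance lets `decide` compute. -/
instance Subgroup.decidableMemZPowersOfFintype {G : Type} [Group G] [Fintype G] [DecidableEq G]
    (z : G) : DecidablePred (· ∈ zpowers z) := fun x =>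
  decidable_of_iff (∃ n : Fin (Fintype.card G), z ^ (n : ℕ) = x) <|
    Iff.trans ⟨fun ⟨n, hn⟩ => ⟨n, hn⟩, fun ⟨n, hn⟩ =>
      ⟨⟨n % Fintype.card G, Nat.mod_lt _ Fintype.card_pos⟩, (pow_mod_card z n).trans hn⟩⟩
      mem_powers_iff_mem_zpowers

instance {G : Type} [Group G] [Fintype G] [DecidableEq G] :
    DecidableRel (enhancedPowerGraph G).Adj := fun x y =>
  inferInstanceAs (Decidable (x ≠ y ∧ ∃ z, x ∈ zpowers z ∧ y ∈ zpowers z))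

instance {V : Type} [Fintype V] [DecidableEq V] (Γ : SimpleGraph V) [DecidableRel Γ.Adj] :
    DecidablePred (IsDominatingVertex Γ) := fun v =>
  inferInstanceAs (Decidable (∀ w, w ≠ v → Γ.Adj v w))

/-- The six non-central elements `±i, ±j, ±k` of `Q₈` go to the six edges of `K₄`, with `x` and
`x⁻¹` going to opposite edges. -/
def quaternionEdge : QuaternionGroup 2 → Sym2 (Fin 4)
  | .a i => if i = 1 then s(0, 1) else s(2, 3)
  | .xa i =>
    if i = 0 then s(0, 2) else if i = 2 then s(1, 3) else if i = 1 then s(0, 3) else s(1, 2)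

theorem isLineGraph_compl_properEnhancedPowerGraph_quaternionGroup :
    IsLineGraph (properEnhancedPowerGraph (QuaternionGroup 2))ᶜ := by
  rw [compl_properGraph]
  have hinj : ∀ u v, ¬ IsDominatingVertex (enhancedPowerGraph (QuaternionGroup 2)) u →
      ¬ IsDominatingVertex (enhancedPowerGraph (QuaternionGroup 2)) v →
      quaternionEdge u = quaternionEdge v → u = v := by
    decide
  have hadj : ∀ u v, ¬ IsDominatingVertex (enhancedPowerGraph (QuaternionGroup 2)) u →
      ¬ IsDominatingVertex (enhancedPowerGraph (QuaternionGroup 2)) v →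
      ((enhancedPowerGraph (QuaternionGroup 2))ᶜ.Adj u v ↔
        u ≠ v ∧ ∃ x ∈ quaternionEdge u, x ∈ quaternionEdge v) := by
    decide
  refine isLineGraph_of_sym2 (fun v => quaternionEdge v)
    (fun u v h => Subtype.ext (hinj u v u.2 v.2 h)) (fun v => ?_) (fun u v => ?_)
  · revert v; decide
  · rw [← Subtype.coe_ne_coe]
    exact hadj u v u.2 v.2

/-- for a finite non-cyclic group, `P_E**(G)` is the complement of a line graph
iff `G` is an elementary abelian 2-group or `Q₈`. -/
theorem properEnhancedPowerGraph_compl_isLineGraph_iff (G : Type) [Group G] [Fintype G]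
    (hnc : ¬ IsCyclic G) :
    IsLineGraph (properEnhancedPowerGraph G)ᶜ ↔
      (IsElemAbelianTwo G ∨ Nonempty (G ≃* QuaternionGroup 2)) := by
  constructor
  · intro hΛ
    by_cases h : ∀ x : G, x ^ 2 = 1
    · have : Nontrivial G :=
        not_subsingleton_iff_nontrivial.mp fun _ => hnc isCyclic_of_subsingleton
      exact Or.inl (isElemAbelianTwo_of_sq_eq_one h)
    · push Not at h
      obtain ⟨x, hx⟩ := h
      exact Or.inr (nonempty_mulEquiv_quaternionGroup_of_isLineGraph hnc hΛ hx)
  · rintro (he | ⟨⟨e⟩⟩)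
    · rw [compl_eq_top.mpr (properEnhancedPowerGraph_eq_bot he.sq_eq_one)]
      exact isLineGraph_top _
    · exact isLineGraph_compl_properEnhancedPowerGraph_quaternionGroup.of_iso
        e.enhancedPowerGraphIso.properGraph.compl
end

section
/- Let G be a finite non-cyclic nilpotent group. If the proper enhanced power graph P_E**(G) is a line graph of some graph, then there is exactly one prime p dividing |G| whose Sylow p-subgroup of G is non-cyclic. -/
open Subgroup

/-!
Line graphs are claw-free: the neighbours of an edge `xy` all contain `x` or `y`, so among three
of them two share an endpoint. In a finite nilpotent group with all Sylow subgroups cyclic the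
group itself is cyclic, so some Sylow subgroup is non-cyclic. Suppose Sylow subgroups `P` and `S`
for distinct primes are both non-cyclic. A non-cyclic finite group has at least three maximal
cyclic subgroups, since it is not the union of two proper subgroups, and generators of distinct
maximal cyclic subgroups of `P` lie in no common cyclic subgroup, even of `G`. Elements of `S`
commute with those of `P` and have coprime orders, so a generator `d` of a maximal cyclic subgroup
of `S` is adjacent to generators `a`, `b`, `c` of three maximal cyclic subgroups of `P`. All four
have non-neighbours, hence survive in `P_E**(G)`, where they form a claw.
-/

namespace SimpleGraph

variable {V W : Type*}

def IsClaw (Γ : SimpleGraph V) (v a b c : V) : Prop :=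
  Γ.Adj v a ∧ Γ.Adj v b ∧ Γ.Adj v c ∧ a ≠ b ∧ a ≠ c ∧ b ≠ c ∧
    ¬Γ.Adj a b ∧ ¬Γ.Adj a c ∧ ¬Γ.Adj b c

def IsClawFree (Γ : SimpleGraph V) : Prop :=
  ∀ v a b c, ¬Γ.IsClaw v a b c

variable {Γ : SimpleGraph V} {Γ' : SimpleGraph W}

theorem Embedding.isClaw_map_iff (f : Γ ↪g Γ') {v a b c : V} :
    Γ'.IsClaw (f v) (f a) (f b) (f c) ↔ Γ.IsClaw v a b c := by
  simp only [IsClaw, f.map_adj_iff, f.injective.ne_iff]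

theorem IsClawFree.comap (f : Γ ↪g Γ') (h : Γ'.IsClawFree) : Γ.IsClawFree :=
  fun _ _ _ _ hclaw => h _ _ _ _ (f.isClaw_map_iff.mpr hclaw)

theorem lineGraph_isClawFree (H : SimpleGraph W) : H.lineGraph.IsClawFree := by
  rintro ⟨v, hv⟩ a b c ⟨hva, hvb, hvc, hab, hac, hbc, nab, nac, nbc⟩
  induction v using Sym2.ind with | h x y => ?_
  have ends : ∀ e : H.edgeSet, H.lineGraph.Adj ⟨s(x, y), hv⟩ e →
      x ∈ (e : Sym2 W) ∨ y ∈ (e : Sym2 W) := by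
    rintro e ⟨-, t, hxy, he⟩
    rcases Sym2.mem_iff.mp hxy with rfl | rfl
    exacts [Or.inl he, Or.inr he]
  have adj : ∀ {e e' : H.edgeSet} t, e ≠ e' → t ∈ (e : Sym2 W) → t ∈ (e' : Sym2 W) →
      H.lineGraph.Adj e e' :=
    fun t hne he he' => lineGraph_adj_iff_exists.mpr ⟨hne, t, he, he'⟩
  rcases ends a hva with ha | ha <;> rcases ends b hvb with hb | hb <;>
    rcases ends c hvc with hc | hc
  all_goals first
    | exact nab (adj _ hab ha hb) | exact nac (adj _ hac ha hc) | exact nbc (adj _ hbc hb hc)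

end SimpleGraph

section ProperGraph

variable {V : Type} {Γ : SimpleGraph V}

theorem IsLineGraph.isClawFree (h : IsLineGraph Γ) : Γ.IsClawFree := by
  obtain ⟨W, H, ⟨e⟩⟩ := h
  exact H.lineGraph_isClawFree.comap e.toEmbedding

theorem SimpleGraph.IsClaw.not_isClawFree_properGraph {v a b c : V} (h : Γ.IsClaw v a b c)
    (hv : ¬IsDominatingVertex Γ v) : ¬(properGraph Γ).IsClawFree := by
  intro hfree
  obtain ⟨-, -, -, hab, hac, hbc, nab, nac, nbc⟩ := id h
  exact hfree ⟨v, hv⟩ ⟨a, fun hd => nab (hd b hab.symm)⟩ ⟨b, fun hd => nbc (hd c hbc.symm)⟩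
    ⟨c, fun hd => nac (hd a hac).symm⟩ ((Embedding.induce _).isClaw_map_iff.mp h)

end ProperGraph

section EnhancedPowerGraph

variable {G : Type} [Group G]

theorem Subgroup.coe_mem_zpowers_coe_iff {P : Subgroup G} {a w : P} :
    (a : G) ∈ zpowers (w : G) ↔ a ∈ zpowers w := by
  simp only [mem_zpowers_iff, Subtype.ext_iff, coe_zpow]

theorem Subgroup.enhancedPowerGraph_adj_coe_iff {P : Subgroup G} {a b : P} :
    (enhancedPowerGraph G).Adj a b ↔ (enhancedPowerGraph P).Adj a b := by
  refine ⟨fun ⟨hne, z, ha, hb⟩ => ?_, fun ⟨hne, w, ha, hb⟩ => ⟨?_, w, ?_, ?_⟩⟩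
  · obtain ⟨g, hg⟩ := (zpowers z ⊓ P).isCyclic_iff_exists_zpowers_eq_top.mp
      (isCyclic_of_le inf_le_left)
    have hgP : g ∈ P := (hg ▸ mem_zpowers g : g ∈ zpowers z ⊓ P).2
    refine ⟨fun h => hne (congrArg _ h), ⟨g, hgP⟩, ?_, ?_⟩ <;>
      rw [← coe_mem_zpowers_coe_iff, hg]
    exacts [⟨ha, a.2⟩, ⟨hb, b.2⟩]
  · exact fun h => hne (Subtype.ext h)
  · exact coe_mem_zpowers_coe_iff.mpr ha
  · exact coe_mem_zpowers_coe_iff.mpr hb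

theorem enhancedPowerGraph_adj_one {x : G} (hx : x ≠ 1) : (enhancedPowerGraph G).Adj 1 x :=
  ⟨hx.symm, x, one_mem _, mem_zpowers x⟩

theorem Commute.mem_zpowers_mul_left {a c : G} (h : Commute a c)
    (hco : (orderOf a).Coprime (orderOf c)) : a ∈ zpowers (a * c) := by
  have hpow : a ^ orderOf c = (a * c) ^ orderOf c := by
    rw [h.mul_pow, pow_orderOf_eq_one, mul_one]
  have ha : a ∈ zpowers (a ^ orderOf c) := mem_zpowers_pow_iff.mpr hco.symm
  exact zpowers_le.mpr (hpow ▸ pow_mem (mem_zpowers _) _) ha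

theorem enhancedPowerGraph_adj_of_commute {x y : G} (hne : x ≠ y) (h : Commute x y)
    (hco : (orderOf x).Coprime (orderOf y)) : (enhancedPowerGraph G).Adj x y :=
  ⟨hne, x * y, h.mem_zpowers_mul_left hco, h.eq ▸ h.symm.mem_zpowers_mul_left hco.symm⟩

theorem IsMaxCyclic.zpowers_eq {M : Subgroup G} (hM : IsMaxCyclic M) {z : G}
    (h : M ≤ zpowers z) : zpowers z = M :=
  hM.2 _ inferInstance h

theorem exists_isMaxCyclic_le [Finite G] {C : Subgroup G} (hC : IsCyclic C) :
    ∃ M, C ≤ M ∧ IsMaxCyclic M := by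
  obtain ⟨M, hCM, hM⟩ := Finite.exists_le_maximal (p := fun N : Subgroup G => IsCyclic N) hC
  exact ⟨M, hCM, hM.prop, fun N hN hMN => le_antisymm (hM.2 hN hMN) hMN⟩

theorem exists_isMaxCyclic_ne [Finite G] (hG : ¬IsCyclic G) {M₁ M₂ : Subgroup G}
    (h₁ : IsCyclic M₁) (h₂ : IsCyclic M₂) : ∃ M, IsMaxCyclic M ∧ M ≠ M₁ ∧ M ≠ M₂ := by
  by_contra! hcover
  have hunion : ((⊤ : Subgroup G) : Set G) ⊆ M₁ ∪ M₂ := fun g _ => by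
    obtain ⟨M, hgM, hM⟩ := exists_isMaxCyclic_le (isCyclic_zpowers g)
    rcases eq_or_ne M M₁ with rfl | hne
    · exact Or.inl (hgM (mem_zpowers g))
    · exact Or.inr (hcover M hM hne ▸ hgM (mem_zpowers g))
  have top_cyclic : ∀ M : Subgroup G, IsCyclic M → ⊤ ≤ M → IsCyclic G := fun M _ hM =>
    isCyclic_of_surjective M.subtype fun g => ⟨⟨g, hM trivial⟩, rfl⟩
  rcases SubgroupClass.subset_union.mp hunion with h | h
  exacts [hG (top_cyclic M₁ h₁ h), hG (top_cyclic M₂ h₂ h)]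

theorem exists_three_isMaxCyclic [Finite G] (hG : ¬IsCyclic G) :
    ∃ M₁ M₂ M₃ : Subgroup G, IsMaxCyclic M₁ ∧ IsMaxCyclic M₂ ∧ IsMaxCyclic M₃ ∧
      M₁ ≠ M₂ ∧ M₁ ≠ M₃ ∧ M₂ ≠ M₃ := by
  obtain ⟨M₁, -, h₁⟩ := exists_isMaxCyclic_le (isCyclic_zpowers (1 : G))
  obtain ⟨M₂, h₂, h₂₁, -⟩ := exists_isMaxCyclic_ne hG h₁.1 h₁.1
  obtain ⟨M₃, h₃, h₃₁, h₃₂⟩ := exists_isMaxCyclic_ne hG h₁.1 h₂.1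
  exact ⟨M₁, M₂, M₃, h₁, h₂, h₃, h₂₁.symm, h₃₁.symm, h₃₂.symm⟩

theorem IsMaxCyclic.not_adj_of_zpowers_eq {M N : Subgroup G} (hM : IsMaxCyclic M)
    (hN : IsMaxCyclic N) (hMN : M ≠ N) {a b : G} (ha : zpowers a = M) (hb : zpowers b = N) :
    a ≠ b ∧ ¬(enhancedPowerGraph G).Adj a b := by
  refine ⟨fun h => hMN (ha ▸ hb ▸ h ▸ rfl), fun ⟨_, z, haz, hbz⟩ => hMN ?_⟩
  rw [← hM.zpowers_eq (ha ▸ zpowers_le.mpr haz), hN.zpowers_eq (hb ▸ zpowers_le.mpr hbz)]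

theorem exists_three_not_adj_enhancedPowerGraph [Finite G] (hG : ¬IsCyclic G) :
    ∃ a b c : G, a ≠ b ∧ a ≠ c ∧ b ≠ c ∧ ¬(enhancedPowerGraph G).Adj a b ∧
      ¬(enhancedPowerGraph G).Adj a c ∧ ¬(enhancedPowerGraph G).Adj b c := by
  obtain ⟨M₁, M₂, M₃, h₁, h₂, h₃, h₁₂, h₁₃, h₂₃⟩ := exists_three_isMaxCyclic hG
  obtain ⟨a, ha⟩ := M₁.isCyclic_iff_exists_zpowers_eq_top.mp h₁.1
  obtain ⟨b, hb⟩ := M₂.isCyclic_iff_exists_zpowers_eq_top.mp h₂.1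
  obtain ⟨c, hc⟩ := M₃.isCyclic_iff_exists_zpowers_eq_top.mp h₃.1
  obtain ⟨hab, nab⟩ := h₁.not_adj_of_zpowers_eq h₂ h₁₂ ha hb
  obtain ⟨hac, nac⟩ := h₁.not_adj_of_zpowers_eq h₃ h₁₃ ha hc
  obtain ⟨hbc, nbc⟩ := h₂.not_adj_of_zpowers_eq h₃ h₂₃ hb hc
  exact ⟨a, b, c, hab, hac, hbc, nab, nac, nbc⟩

theorem exists_claw_enhancedPowerGraph [Finite G] {P S : Subgroup G}
    (hcomm : ∀ x ∈ P, ∀ y ∈ S, Commute x y) (hcop : (Nat.card P).Coprime (Nat.card S))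
    (hP : ¬IsCyclic P) (hS : ¬IsCyclic S) : ∃ v a b c : G,
      (enhancedPowerGraph G).IsClaw v a b c ∧ ¬IsDominatingVertex (enhancedPowerGraph G) v := by
  obtain ⟨a, b, c, hab, hac, hbc, nab, nac, nbc⟩ := exists_three_not_adj_enhancedPowerGraph hP
  obtain ⟨d, e, -, hde, -, -, nde, -, -⟩ := exists_three_not_adj_enhancedPowerGraph hS
  have ne_one : ∀ {x y : P}, x ≠ y → ¬(enhancedPowerGraph P).Adj x y → x ≠ 1 := by
    rintro x y hxy nxy rfl
    exact nxy (enhancedPowerGraph_adj_one hxy.symm)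
  have adj_d : ∀ x : P, x ≠ 1 → (enhancedPowerGraph G).Adj d x := by
    intro x hx
    have hco : (orderOf (d : G)).Coprime (orderOf (x : G)) := by
      rw [orderOf_coe, orderOf_coe]
      exact (hcop.symm.coprime_dvd_left (orderOf_dvd_natCard d)).coprime_dvd_right
        (orderOf_dvd_natCard x)
    refine enhancedPowerGraph_adj_of_commute (fun h => hx ?_) (hcomm x x.2 d d.2).symm hco
    rw [h, Nat.coprime_self, orderOf_eq_one_iff] at hco
    exact Subtype.ext hco
  refine ⟨d, a, b, c, ⟨adj_d a (ne_one hab nab), adj_d b (ne_one hbc nbc),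
    adj_d c (ne_one hac.symm fun h => nac h.symm), Subtype.coe_injective.ne hab,
    Subtype.coe_injective.ne hac, Subtype.coe_injective.ne hbc,
    enhancedPowerGraph_adj_coe_iff.not.mpr nab, enhancedPowerGraph_adj_coe_iff.not.mpr nac,
    enhancedPowerGraph_adj_coe_iff.not.mpr nbc⟩, fun hdom => ?_⟩
  exact nde (enhancedPowerGraph_adj_coe_iff.mp (hdom e (Subtype.coe_injective.ne hde.symm)))

end EnhancedPowerGraph

theorem IsPGroup.dvd_card_of_not_isCyclic {p : ℕ} [Fact p.Prime] {G : Type*} [Group G]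
    (hG : IsPGroup p G) (hnc : ¬IsCyclic G) : p ∣ Nat.card G := by
  refine hG.card_eq_or_dvd.resolve_left fun h => hnc ?_
  have := (Nat.card_eq_one_iff_unique.mp h).1
  infer_instance

/-- if `G` is a finite non-cyclic nilpotent group whose proper enhanced power
graph is a line graph, then exactly one prime dividing `|G|` has a non-cyclic Sylow
subgroup. -/
theorem exists_unique_noncyclic_sylow (G : Type) [Group G] [Fintype G]
    (hnc : ¬ IsCyclic G) (hnil : Group.IsNilpotent G)
    (h : IsLineGraph (properEnhancedPowerGraph G)) :
    ∃! p : ℕ, p.Prime ∧ p ∣ Nat.card G ∧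
      ∃ Q : Sylow p G, ¬ IsCyclic ↥(Q : Subgroup G) := by
  obtain ⟨p, hp, Q, hQ⟩ : ∃ p : ℕ, p.Prime ∧ ∃ Q : Sylow p G, ¬IsCyclic Q := by
    by_contra! hcyc
    have : IsZGroup G := ⟨hcyc⟩
    exact hnc inferInstance
  have := Fact.mk hp
  refine ⟨p, ⟨hp, (Q.isPGroup'.dvd_card_of_not_isCyclic hQ).trans (card_subgroup_dvd_card _),
    Q, hQ⟩, ?_⟩
  rintro q ⟨hq, -, R, hR⟩
  by_contra hqp
  have := Fact.mk hq
  have hdisj := IsPGroup.disjoint_of_ne q p hqp _ _ R.isPGroup' Q.isPGroup'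
  obtain ⟨v, a, b, c, hclaw, hv⟩ := exists_claw_enhancedPowerGraph
    (fun x hx y hy => commute_of_normal_of_disjoint _ _ inferInstance inferInstance hdisj x y hx hy)
    (IsPGroup.coprime_card_of_ne q p hqp _ _ R.isPGroup' Q.isPGroup') hR hQ
  exact hclaw.not_isClawFree_properGraph hv h.isClawFree
end
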